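/- For all finite sets u, v, w, w₁ of bimodal formulas: if w ∈ CCS(u ∪ w₁) and w₁ ∈ CCS(v), then w ∈ CCS(u ∪ v). -/
import Mathlib


/-- Formulas of bimodal modal logic. -/
inductive BFormula : Type
  | atom : ℕ → BFormula
  | falsum : BFormula
  | neg : BFormula → BFormula
  | and : BFormula → BFormula → BFormula
  | boxa : BFormula → BFormula
  | boxb : BFormula → BFormula
deriving DecidableEq

/-- `CSF(w)`: the least set of formulas containing `w` and closed under the classical
decomposition rules. -/
inductive CSF (w : Set BFormula) : BFormula → Prop
  | base {φ} : φ ∈ w → CSF w φ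
  | andl {φ ψ} : CSF w (.and φ ψ) → CSF w φ
  | andr {φ ψ} : CSF w (.and φ ψ) → CSF w ψ
  | negandl {φ ψ} : CSF w (.neg (.and φ ψ)) → CSF w (.neg φ)
  | negandr {φ ψ} : CSF w (.neg (.and φ ψ)) → CSF w (.neg ψ)
  | negE {φ} : CSF w (.neg φ) → CSF w φ

/-- `w ∈ CCS(u)`: `w` is a consistent classical saturation of `u`, i.e. a finite set
with `u ⊆ w ⊆ CSF(u)`, closed under the classical saturation rules, not containing
`⊥`, and not containing both a formula and its negation. -/
def CCS (u w : Set BFormula) : Prop :=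
  w.Finite ∧ u ⊆ w ∧ (∀ φ ∈ w, CSF u φ) ∧
  (∀ φ ψ : BFormula, BFormula.and φ ψ ∈ w → φ ∈ w ∧ ψ ∈ w) ∧
  (∀ φ ψ : BFormula, BFormula.neg (.and φ ψ) ∈ w →
    BFormula.neg φ ∈ w ∨ BFormula.neg ψ ∈ w) ∧
  (∀ φ : BFormula, BFormula.neg (.neg φ) ∈ w → φ ∈ w) ∧
  BFormula.falsum ∉ w ∧
  (∀ φ : BFormula, BFormula.neg φ ∈ w → φ ∉ w)

lemma CSF_trans {s t : Set BFormula} (h : ∀ φ ∈ s, CSF t φ) :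
    ∀ {φ}, CSF s φ → CSF t φ := by
  intro φ hφ
  induction hφ with
  | base hb => exact h _ hb
  | andl _ ih => exact CSF.andl ih
  | andr _ ih => exact CSF.andr ih
  | negandl _ ih => exact CSF.negandl ih
  | negandr _ ih => exact CSF.negandr ih
  | negE _ ih => exact CSF.negE ih

/-- If `w ∈ CCS(u ∪ w₁)` and `w₁ ∈ CCS(v)`, then `w ∈ CCS(u ∪ v)`. -/
theorem stmt14 (u v w w₁ : Set BFormula)
    (hu : u.Finite) (hv : v.Finite) (hw : w.Finite) (hw₁ : w₁.Finite)
    (h1 : CCS (u ∪ w₁) w) (h2 : CCS v w₁) :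
    CCS (u ∪ v) w := by
  obtain ⟨hf, hsub, hcsf, hand, hnand, hnn, hfal, hneg⟩ := h1
  obtain ⟨hf1, hsub1, hcsf1, _⟩ := h2
  refine ⟨hf, ?_, ?_, hand, hnand, hnn, hfal, hneg⟩
  · intro φ hφ
    rcases hφ with hφ | hφ
    · exact hsub (Or.inl hφ)
    · exact hsub (Or.inr (hsub1 hφ))
  · intro φ hφ
    refine CSF_trans ?_ (hcsf φ hφ)
    intro ψ hψ
    rcases hψ with hψ | hψ
    · exact CSF.base (Or.inl hψ)
    · exact CSF_trans (fun χ hχ => CSF.base (Or.inr hχ)) (hcsf1 ψ hψ)
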